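/- Let a and b be unit vectors in a complex Hilbert space H and let A be the rank-one operator A x = ⟨x, a⟩ b. Then ‖A‖² − w(A)² ≤ ‖A*A − AA*‖, where w(A) = sup_{‖x‖=1} |⟨A x, x⟩| is the numerical radius of A. -/

import Mathlib

/-! Write `A = rankOne b a`; then `‖A‖ = 1`, and since `a`, `b` are unit vectors, `A*A` and `AA*`
are the orthogonal projections onto `ℂ a` and `ℂ b`. Testing both the numerical radius and the
self-commutator on the single vector `a` gives `w(A) ≥ |⟨a, b⟩|` and
`‖A*A − AA*‖ ≥ 1 − |⟨a, b⟩|²`, so `‖A‖² − w(A)² ≤ 1 − |⟨a, b⟩|² ≤ ‖A*A − AA*‖`. -/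

open ContinuousLinearMap InnerProductSpace

section

variable {𝕜 E : Type*} [RCLike 𝕜] [NormedAddCommGroup E] [InnerProductSpace 𝕜 E]

noncomputable def numericalRadius (T : E →L[𝕜] E) : ℝ :=
  sSup ((fun x : E => ‖(inner 𝕜 (T x) x : 𝕜)‖) '' {x : E | ‖x‖ = 1})

theorem norm_inner_apply_self_le_opNorm (T : E →L[𝕜] E) {x : E} (hx : ‖x‖ = 1) :
    ‖(inner 𝕜 (T x) x : 𝕜)‖ ≤ ‖T‖ :=
  calc ‖(inner 𝕜 (T x) x : 𝕜)‖ ≤ ‖T x‖ * ‖x‖ := norm_inner_le_norm _ _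
    _ ≤ ‖T‖ * ‖x‖ * ‖x‖ := by gcongr; exact T.le_opNorm x
    _ = ‖T‖ := by rw [hx, mul_one, mul_one]

theorem norm_inner_apply_self_le_numericalRadius (T : E →L[𝕜] E) {x : E} (hx : ‖x‖ = 1) :
    ‖(inner 𝕜 (T x) x : 𝕜)‖ ≤ numericalRadius T := by
  refine le_csSup ⟨‖T‖, ?_⟩ ⟨x, hx, rfl⟩
  rintro _ ⟨y, hy, rfl⟩
  exact norm_inner_apply_self_le_opNorm T hy

theorem inner_rankOne_self_apply_self (x z : E) :
    inner 𝕜 (rankOne 𝕜 x x z) z = ((‖(inner 𝕜 x z : 𝕜)‖ ^ 2 : ℝ) : 𝕜) := by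
  rw [rankOne_apply, inner_smul_left, RCLike.conj_mul]
  norm_cast

theorem norm_inner_le_numericalRadius_rankOne (x : E) {y : E} (hy : ‖y‖ = 1) :
    ‖(inner 𝕜 x y : 𝕜)‖ ≤ numericalRadius (rankOne 𝕜 x y) := by
  simpa [hy] using norm_inner_apply_self_le_numericalRadius (rankOne 𝕜 x y) hy

theorem one_sub_norm_inner_sq_le_norm_rankOne_self_sub {x y : E} (hx : ‖x‖ = 1) :
    1 - ‖(inner 𝕜 y x : 𝕜)‖ ^ 2 ≤ ‖rankOne 𝕜 x x - rankOne 𝕜 y y‖ := by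
  have hxx : ‖(inner 𝕜 x x : 𝕜)‖ = 1 := by simp [hx]
  have key : inner 𝕜 ((rankOne 𝕜 x x - rankOne 𝕜 y y) x) x
      = ((1 - ‖(inner 𝕜 y x : 𝕜)‖ ^ 2 : ℝ) : 𝕜) := by
    rw [sub_apply, inner_sub_left, inner_rankOne_self_apply_self, inner_rankOne_self_apply_self,
      hxx]
    push_cast; ring
  calc 1 - ‖(inner 𝕜 y x : 𝕜)‖ ^ 2 ≤ ‖((1 - ‖(inner 𝕜 y x : 𝕜)‖ ^ 2 : ℝ) : 𝕜)‖ := by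
        rw [RCLike.norm_ofReal]; exact le_abs_self _
    _ ≤ _ := key ▸ norm_inner_apply_self_le_opNorm _ hx

variable [CompleteSpace E]

theorem adjoint_rankOne_comp_rankOne {x : E} (hx : ‖x‖ = 1) (y : E) :
    adjoint (rankOne 𝕜 x y) ∘L rankOne 𝕜 x y = rankOne 𝕜 y y := by
  simp [comp_rankOne, hx]

theorem rankOne_comp_adjoint_rankOne (x : E) {y : E} (hy : ‖y‖ = 1) :
    rankOne 𝕜 x y ∘L adjoint (rankOne 𝕜 x y) = rankOne 𝕜 x x := by
  simp [comp_rankOne, hy]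

end

theorem norm_sq_sub_numericalRadius_sq_le_selfCommutator_norm_rank_one
    {H : Type*} [NormedAddCommGroup H] [InnerProductSpace ℂ H] [CompleteSpace H]
    (a b : H) (ha : ‖a‖ = 1) (hb : ‖b‖ = 1)
    (A : H →L[ℂ] H) (hA : ∀ x : H, A x = (inner ℂ a x : ℂ) • b) :
    ‖A‖ ^ 2 - (sSup ((fun x : H => ‖(inner ℂ (A x) x : ℂ)‖) '' {x : H | ‖x‖ = 1})) ^ 2
      ≤ ‖adjoint A ∘L A - A ∘L adjoint A‖ := by
  obtain rfl : A = rankOne ℂ b a := ext hA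
  change ‖rankOne ℂ b a‖ ^ 2 - numericalRadius (rankOne ℂ b a) ^ 2 ≤ _
  rw [adjoint_rankOne_comp_rankOne hb, rankOne_comp_adjoint_rankOne b ha, norm_rankOne, ha, hb]
  have hw := norm_inner_le_numericalRadius_rankOne (𝕜 := ℂ) b ha
  have hc := one_sub_norm_inner_sq_le_norm_rankOne_self_sub (𝕜 := ℂ) (y := b) ha
  nlinarith [norm_nonneg (inner ℂ b a : ℂ)]
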